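/- arXiv:2105.02547 — 2 statements merged into one kernel-verified Lean document; each statement's English description precedes it below -/
import Mathlib

section
/- Let K, ℓ, f_{λλ} ∈ ℝ with K ≠ 0, let A = Σ_{σ,τ∈L} f_{στ} ≠ 0 (sums over a subset L ⊆ Σ of a finite index set Σ, with symmetric coefficients f_{στ} = f_{τσ}), and set d = −ℓ/K, R = −(Σ_{σ,τ∈Σ} f_{στ} ℓ² − K (Σ_{σ∈Σ} f_{σλ}) ℓ + K² f_{λλ})/K³. Suppose Σ_{τ∉L} a_τ = K (the coefficients a_σ vanish in total over L). Define B = Σ_{σ∈L} f_{σλ} + 2 (Σ_{σ∈L, τ∉L} f_{στ}) d, C' = (Σ_{τ∉L} a_τ) R + (Σ_{τ∉L} f_{τλ}) d + (Σ_{σ,τ∉L} f_{στ}) d² + f_{λλ}, and E = Σ_{σ∈L} f_{σλ} − 2 (ℓ/K) Σ_{σ∈Σ, τ∈L} f_{στ}. Then B² − 4 A C' = E², and the two roots (−B ± E)/(2A) of the quadratic A y² + B y + C' equal −ℓ/K and (ℓ/K)(1 + 2 (Σ_{σ∈L, τ∉L} f_{στ})/A) − (Σ_{σ∈L} f_{σλ})/A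 respectively. -/
/-!
Substituting `R` and `d = -ℓ/K` into `C'`, and splitting the sums over `Σ` into the blocks
`L × L`, `L × Lᶜ`, `Lᶜ × L`, `Lᶜ × Lᶜ` (the two mixed blocks agree by symmetry of `f`), collapses
`C'` to `-c d` with `c = (A + 2m) d + Σ_L f_{σλ}`, `m = Σ_{L × Lᶜ} f_{στ}`, while `B = c - A d`.
So the quadratic is `(y - d)(A y + c)`, whose discriminant is `(c + A d)² = E²` and whose roots
are `d` and `-c/A`.
-/

open Finset

theorem discrim_eq_sq_of_factor {R : Type*} [CommRing R] {A B C c d : R}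
    (hB : B = c - A * d) (hC : C = -(c * d)) : discrim A B C = (c + A * d) ^ 2 := by
  rw [discrim, hB, hC]; ring

theorem quadratic_roots_eq_of_factor {K : Type*} [Field K] (h2 : (2 : K) ≠ 0)
    {A B E c d : K} (hA : A ≠ 0) (hB : B = c - A * d) (hE : E = c + A * d) :
    (-B + E) / (2 * A) = d ∧ (-B - E) / (2 * A) = -c / A := by
  subst hB hE
  constructor <;> field_simp <;> ring

theorem sum_sum_comm_of_symm {ι M : Type*} [AddCommMonoid M] {F : ι → ι → M}
    (hF : ∀ σ τ, F σ τ = F τ σ) (s t : Finset ι) :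
    ∑ σ ∈ s, ∑ τ ∈ t, F σ τ = ∑ σ ∈ t, ∑ τ ∈ s, F σ τ := by
  rw [sum_comm]
  exact sum_congr rfl fun σ _ => sum_congr rfl fun τ _ => hF τ σ

section BlockSums

variable {ι R : Type*} [Fintype ι] [DecidableEq ι] (L : Finset ι)

theorem sum_univ_sum_of_symm {M : Type*} [AddCommMonoid M] {F : ι → ι → M}
    (hF : ∀ σ τ, F σ τ = F τ σ) :
    ∑ σ, ∑ τ ∈ L, F σ τ = ∑ σ ∈ L, ∑ τ ∈ L, F σ τ + ∑ σ ∈ L, ∑ τ ∈ Lᶜ, F σ τ := by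
  rw [← sum_add_sum_compl L, sum_sum_comm_of_symm hF Lᶜ L]

theorem sum_univ_sum_univ_of_symm [CommSemiring R] {F : ι → ι → R}
    (hF : ∀ σ τ, F σ τ = F τ σ) :
    ∑ σ, ∑ τ, F σ τ = ∑ σ ∈ L, ∑ τ ∈ L, F σ τ + 2 * ∑ σ ∈ L, ∑ τ ∈ Lᶜ, F σ τ
      + ∑ σ ∈ Lᶜ, ∑ τ ∈ Lᶜ, F σ τ := by
  calc ∑ σ, ∑ τ, F σ τ = ∑ σ, ∑ τ ∈ L, F σ τ + ∑ σ, ∑ τ ∈ Lᶜ, F σ τ := by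
        simp only [← sum_add_distrib, sum_add_sum_compl]
    _ = _ := by
        rw [sum_univ_sum_of_symm L hF, ← sum_add_sum_compl L fun σ => ∑ τ ∈ Lᶜ, F σ τ]
        ring

end BlockSums

/-- The discriminant identity `B² − 4AC' = E²` from the transcritical
bifurcation analysis (Lemma A.1 of the paper), together with the explicit values
of the two roots `(−B ± E)/(2A)` of the quadratic `A y² + B y + C'`. -/
theorem discriminant_identity {ι : Type*} [Fintype ι] [DecidableEq ι]
    (L : Finset ι) (a : ι → ℝ) (F : ι → ι → ℝ) (fl : ι → ℝ)
    (ell fll K : ℝ)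
    (hsym : ∀ σ τ : ι, F σ τ = F τ σ)
    (hK : K ≠ 0)
    (haK : ∑ τ ∈ Lᶜ, a τ = K)
    (A B C' E d R : ℝ)
    (hA : A = ∑ σ ∈ L, ∑ τ ∈ L, F σ τ)
    (hA0 : A ≠ 0)
    (hd : d = -ell / K)
    (hR : R = -((∑ σ, ∑ τ, F σ τ) * ell ^ 2 - K * (∑ σ, fl σ) * ell
        + K ^ 2 * fll) / K ^ 3)
    (hB : B = (∑ σ ∈ L, fl σ) + 2 * (∑ σ ∈ L, ∑ τ ∈ Lᶜ, F σ τ) * d)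
    (hC : C' = (∑ τ ∈ Lᶜ, a τ) * R + (∑ τ ∈ Lᶜ, fl τ) * d
        + (∑ σ ∈ Lᶜ, ∑ τ ∈ Lᶜ, F σ τ) * d ^ 2 + fll)
    (hE : E = (∑ σ ∈ L, fl σ) - 2 * (ell / K) * (∑ σ, ∑ τ ∈ L, F σ τ)) :
    B ^ 2 - 4 * A * C' = E ^ 2 ∧
    (-B + E) / (2 * A) = -ell / K ∧
    (-B - E) / (2 * A) =
      (ell / K) * (1 + 2 * (∑ σ ∈ L, ∑ τ ∈ Lᶜ, F σ τ) / A)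
        - (∑ σ ∈ L, fl σ) / A := by
  set m := ∑ σ ∈ L, ∑ τ ∈ Lᶜ, F σ τ
  subst hd
  set c := (A + 2 * m) * (-ell / K) + ∑ σ ∈ L, fl σ with hc
  have hB' : B = c - A * (-ell / K) := by rw [hB]; ring
  have hC' : C' = -(c * (-ell / K)) := by
    rw [hC, haK, hR, sum_univ_sum_univ_of_symm L hsym, ← sum_add_sum_compl L fl, ← hA, hc]
    field_simp
    ring
  have hE' : E = c + A * (-ell / K) := by
    rw [hE, sum_univ_sum_of_symm L hsym, ← hA]; ring
  obtain ⟨hroot, hroot'⟩ := quadratic_roots_eq_of_factor two_ne_zero hA0 hB' hE'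
  refine ⟨hE' ▸ discrim_eq_sq_of_factor hB' hC', hroot, ?_⟩
  rw [hroot', hc]
  field_simp
  ring
end

section
/- Let C be the cell set of a feedforward network, B ⊆ C a subnetwork, and for p ∈ C define μ_p = 0 if p ∈ B, and otherwise μ_p = (max over cells b ∈ B and loop-free paths ω from b to p of the number of critical cells q ∈ ω with q ∉ B) − 1, where 'critical' is a fixed predicate on cells such that every p ∉ B with all q ⊳ p in B is critical, and such that every p ∉ B lies on a path from some cell of B. Then μ satisfies the recursion: μ_p = 0 for p ∈ B; μ_p = 0 for p ∉ B with q ∈ B for all q ⊳ p; μ_p = max_{q ⊳ p} μ_q if p ∉ B is non-critical; and μ_p = max_{q ⊳ p} μ_q + 1 if p ∉ B is critical and some q ⊳ p lies outside B. -/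
/-- `netStep S p q` : cell `p` receives an input (arrow) from `q`. -/
def netStep {C : Type*} (S : Finset (C → C)) (p q : C) : Prop := ∃ σ ∈ S, σ p = q

/-- `netLE S p q` : there is a path from `q` to `p` (the relation `p ⊴ q`). -/
def netLE {C : Type*} (S : Finset (C → C)) (p q : C) : Prop :=
  Relation.ReflTransGen (netStep S) p q

/-- A cycle of length `≥ 2`: pairwise distinct cells in a closed chain of arrows. -/
def HasCycle {C : Type*} (S : Finset (C → C)) : Prop :=
  ∃ (k : ℕ) (ω : Fin (k + 2) → C), Function.Injective ω ∧
    netStep S (ω (Fin.last (k + 1))) (ω 0) ∧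
    ∀ i : Fin (k + 1), netStep S (ω i.castSucc) (ω i.succ)

open scoped Classical

/-!
Write `N p` (`maxCritCount`) for the supremum in (3.4), so that `μ = N - 1` everywhere: a
loop-free path ending in the upward-closed `B` never leaves `B`. The second cell of a loop-free
path into `p ∉ B` is an input `q ⊳ p`, which gives `N p ≤ max_{q ⊳ p} N q + [p critical]`.
Conversely, since there are no cycles no cell of a path into `q` lies strictly below `q`, so such
a path can be prolonged to `p` and the bound is attained. Finally `N q ≥ 1` for `q ∉ B`: a maximal
non-`B` cell above `q` is critical. This is what lets the `- 1` pass through the `+ 1` in the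
critical case.
-/

theorem Nat.sSup_image_sub {s : Set ℕ} (hs : BddAbove s) (k : ℕ) :
    sSup ((· - k) '' s) = sSup s - k := by
  rcases s.eq_empty_or_nonempty with rfl | hne
  · simp
  · exact (Monotone.map_csSup_of_continuousAt continuous_of_discreteTopology.continuousAt
      (fun _ _ h => Nat.sub_le_sub_right h k) hne hs).symm

theorem Finset.card_filter_univ_eq_countP_ofFn {α : Type*} {n : ℕ} (ω : Fin n → α)
    (P : α → Prop) [DecidablePred P] :
    (Finset.univ.filter fun i => P (ω i)).card = (List.ofFn ω).countP fun x => P x := by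
  rw [← Multiset.coe_countP, ← Fin.univ_val_map, Multiset.countP_map]
  rfl

namespace FeedforwardNetwork

open Relation

variable {C : Type*} {S : Finset (C → C)}

def strictStep (S : Finset (C → C)) (p q : C) : Prop := netStep S p q ∧ p ≠ q

theorem reflTransGen_strictStep_of_netLE {p q : C} (h : netLE S p q) :
    ReflTransGen (strictStep S) p q := by
  rw [← reflTransGen_reflGen]
  refine ReflTransGen.mono (fun a b hab => ?_) p q h
  by_cases hba : a = b
  · exact hba ▸ ReflGen.refl
  · exact ReflGen.single ⟨hab, hba⟩

theorem transGen_strictStep_of_netLE {p q : C} (h : netLE S p q) (hqp : q ≠ p) :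
    TransGen (strictStep S) p q :=
  (reflTransGen_iff_eq_or_transGen.1 (reflTransGen_strictStep_of_netLE h)).resolve_left hqp

theorem hasCycle_of_isChain {x : C} {l : List C} (hnd : (x :: l).Nodup)
    (hc : (x :: l).IsChain (netStep S)) (hl : l ≠ [])
    (hclose : netStep S ((x :: l).getLast (List.cons_ne_nil x l)) x) : HasCycle S := by
  obtain ⟨y, t, rfl⟩ := List.exists_cons_of_ne_nil hl
  refine ⟨t.length, (x :: y :: t).get, List.nodup_iff_injective_get.1 hnd, ?_, fun i => ?_⟩
  · simpa [List.getLast_eq_getElem] using hclose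
  · exact List.isChain_iff_getElem.1 hc i (by simp [Nat.lt_succ_iff.1 i.2])

/-- Walking back from `a` to `c`, prepend cells to the loop-free chain `c :: l` until the walk
re-enters it; the segment of the chain from `c` to the re-entry point then closes up. -/
theorem hasCycle_of_transGen {a c : C} (h : TransGen (strictStep S) a c) {l : List C}
    (hnd : (c :: l).Nodup) (hc : (c :: l).IsChain (netStep S))
    (hlast : (c :: l).getLast (List.cons_ne_nil c l) = a) : HasCycle S := by
  induction h generalizing l with
  | single hac =>
    refine hasCycle_of_isChain hnd hc ?_ (hlast ▸ hac.1)
    rintro rfl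
    exact hac.2 hlast.symm
  | @tail b c _ hbc ih =>
    by_cases hb : b ∈ l
    · obtain ⟨s, t, rfl⟩ := List.append_of_mem hb
      have hpre : c :: (s ++ [b]) <+: c :: (s ++ b :: t) := by simp
      exact hasCycle_of_isChain (hnd.sublist hpre.sublist) (hc.prefix hpre) (by simp)
        (by simpa using hbc.1)
    · have hb' : b ∉ c :: l := by simp [hbc.2, hb]
      exact ih (List.nodup_cons.2 ⟨hb', hnd⟩) (hc.cons (by simpa using hbc.1))
        (by simpa using hlast)

theorem not_transGen_strictStep_self (hff : ¬ HasCycle S) (p : C) :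
    ¬ TransGen (strictStep S) p p := fun h =>
  hff (hasCycle_of_transGen h (List.nodup_singleton p) (List.isChain_singleton p) rfl)

theorem wellFounded_strictAbove [Finite C] (hff : ¬ HasCycle S) :
    WellFounded (flip (TransGen (strictStep S))) :=
  haveI : IsTrans C (flip (TransGen (strictStep S))) := ⟨fun _ _ _ h₁ h₂ => h₂.trans h₁⟩
  haveI : Std.Irrefl (flip (TransGen (strictStep S))) := ⟨not_transGen_strictStep_self hff⟩
  Finite.wellFounded_of_trans_of_irrefl _

theorem netLE_of_mem_of_isChain {p x : C} {l : List C} (hc : (p :: l).IsChain (netStep S))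
    (hx : x ∈ p :: l) : netLE S p x :=
  hc.induction (netLE S p) _ (fun _ _ hyz hy => hy.tail hyz) (fun _ => .refl) x hx

variable (S) in
/-- `p :: l` is a loop-free path from a cell of `B` to `p`, listed backwards from `p`. -/
def IsPathTo (B : Set C) (p : C) (l : List C) : Prop :=
  (p :: l).Nodup ∧ (p :: l).IsChain (netStep S) ∧ (p :: l).getLast (List.cons_ne_nil p l) ∈ B

theorem IsPathTo.cons (hff : ¬ HasCycle S) {B : Set C} {p q : C} {l : List C}
    (hl : IsPathTo S B q l) (hpq : strictStep S p q) : IsPathTo S B p (q :: l) := by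
  obtain ⟨hnd, hc, hlast⟩ := hl
  refine ⟨List.nodup_cons.2 ⟨fun hp => ?_, hnd⟩, hc.cons (by simpa using hpq.1),
    by simpa using hlast⟩
  exact not_transGen_strictStep_self hff p
    (TransGen.head' hpq (reflTransGen_strictStep_of_netLE (netLE_of_mem_of_isChain hc hp)))

section Counts

variable (S) (B : Set C) (Crit : C → Prop)

def critCounts (p : C) : Set ℕ :=
  {n : ℕ | ∃ b ∈ B, ∃ (k : ℕ) (ω : Fin (k + 1) → C),
    Function.Injective ω ∧ ω 0 = b ∧ ω (Fin.last k) = p ∧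
    (∀ i : Fin k, netStep S (ω i.succ) (ω i.castSucc)) ∧
    n = (Finset.univ.filter fun i : Fin (k + 1) => Crit (ω i) ∧ ω i ∉ B).card}

/-- Off `B`, the amplification number `μ_p` of (3.4) is `maxCritCount S B Crit p - 1`. -/
noncomputable def maxCritCount (p : C) : ℕ := sSup (critCounts S B Crit p)

variable {S B Crit}

theorem mem_critCounts_iff {p : C} {n : ℕ} :
    n ∈ critCounts S B Crit p ↔
      ∃ l, IsPathTo S B p l ∧ n = (p :: l).countP fun x => Crit x ∧ x ∉ B := by
  constructor
  · rintro ⟨b, hb, k, ω, hinj, rfl, rfl, hstep, rfl⟩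
    have hrev : ω (Fin.last k) :: (List.ofFn fun i : Fin k => ω i.castSucc).reverse =
        (List.ofFn ω).reverse := by
      rw [List.ofFn_succ', List.concat_eq_append, List.reverse_append]
      rfl
    refine ⟨(List.ofFn fun i : Fin k => ω i.castSucc).reverse, ⟨?_, ?_, ?_⟩, ?_⟩ <;>
      simp only [hrev]
    · exact List.nodup_reverse.2 (List.nodup_ofFn.2 hinj)
    · exact List.isChain_reverse.2 (List.isChain_ofFn.2 fun i hi => hstep ⟨i, by omega⟩)
    · simpa [List.getLast_reverse, List.head_ofFn] using hb
    · rw [List.countP_reverse]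
      convert Finset.card_filter_univ_eq_countP_ofFn ω (fun y => Crit y ∧ y ∉ B) using 2
  · rintro ⟨l, ⟨hnd, hc, hlast⟩, rfl⟩
    obtain ⟨k, ω, hω⟩ : ∃ k, ∃ ω : Fin (k + 1) → C, List.ofFn ω = (p :: l).reverse := by
      obtain ⟨x, t, hxt⟩ :=
        List.exists_cons_of_ne_nil (List.reverse_ne_nil_iff.2 (List.cons_ne_nil p l))
      exact ⟨t.length, (x :: t).get, by rw [List.ofFn_get, hxt]⟩
    refine ⟨_, hlast, k, ω, List.nodup_ofFn.1 (hω ▸ List.nodup_reverse.2 hnd), ?_, ?_,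
      fun i => List.isChain_ofFn.1 (hω ▸ List.isChain_reverse.2 hc) i (by omega), ?_⟩
    · simpa [List.getLast_eq_getLastD, List.getLastD_eq_getLast?] using congrArg List.head? hω
    · have h := congrArg List.getLast? hω
      rw [List.ofFn_succ', List.concat_eq_append] at h
      simpa using h
    · rw [← List.countP_reverse, ← hω]
      convert (Finset.card_filter_univ_eq_countP_ofFn ω fun y => Crit y ∧ y ∉ B).symm using 2

theorem mem_of_netLE (hB : ∀ σ ∈ S, ∀ b ∈ B, σ b ∈ B) {p q : C} (h : netLE S p q)
    (hp : p ∈ B) : q ∈ B := by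
  induction h with
  | refl => exact hp
  | tail _ hstep ih =>
    obtain ⟨σ, hσ, rfl⟩ := hstep
    exact hB σ hσ _ ih

theorem zero_mem_critCounts {b : C} (hb : b ∈ B) : 0 ∈ critCounts S B Crit b :=
  mem_critCounts_iff.2 ⟨[], ⟨List.nodup_singleton b, List.isChain_singleton b, hb⟩, by simp [hb]⟩

theorem add_mem_critCounts (hff : ¬ HasCycle S) {p q : C} (hpq : strictStep S p q) {n : ℕ}
    (hn : n ∈ critCounts S B Crit q) :
    n + (if Crit p ∧ p ∉ B then 1 else 0) ∈ critCounts S B Crit p := by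
  obtain ⟨l, hl, rfl⟩ := mem_critCounts_iff.1 hn
  exact mem_critCounts_iff.2 ⟨q :: l, hl.cons hff hpq, by simp [List.countP_cons]⟩

theorem exists_strictStep_of_mem_critCounts {p : C} (hp : p ∉ B) {n : ℕ}
    (hn : n ∈ critCounts S B Crit p) :
    ∃ q, strictStep S p q ∧ ∃ m ∈ critCounts S B Crit q, n = m + if Crit p then 1 else 0 := by
  obtain ⟨l, ⟨hnd, hc, hlast⟩, rfl⟩ := mem_critCounts_iff.1 hn
  obtain ⟨q, t, rfl⟩ := List.exists_cons_of_ne_nil (show l ≠ [] by rintro rfl; exact hp hlast)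
  obtain ⟨hpq, hc⟩ := List.isChain_cons_cons.1 hc
  refine ⟨q, ⟨hpq, ?_⟩, _,
    mem_critCounts_iff.2 ⟨t, ⟨hnd.of_cons, hc, by simpa using hlast⟩, rfl⟩,
    by simp [List.countP_cons, hp]⟩
  rintro rfl
  exact (List.nodup_cons.1 hnd).1 List.mem_cons_self

theorem critCounts_nonempty (hff : ¬ HasCycle S) (hreach : ∀ p ∉ B, ∃ b ∈ B, netLE S p b)
    (p : C) : (critCounts S B Crit p).Nonempty := by
  by_cases hp : p ∈ B
  · exact ⟨0, zero_mem_critCounts hp⟩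
  obtain ⟨b, hb, hpb⟩ := hreach p hp
  have h := reflTransGen_strictStep_of_netLE hpb
  clear hp hpb
  induction h using ReflTransGen.head_induction_on with
  | refl => exact ⟨0, zero_mem_critCounts hb⟩
  | head hpq _ ih => exact ⟨_, add_mem_critCounts hff hpq ih.some_mem⟩

theorem critCounts_bddAbove [Fintype C] (p : C) : BddAbove (critCounts S B Crit p) := by
  refine ⟨Fintype.card C, fun n hn => ?_⟩
  obtain ⟨l, ⟨hnd, -, -⟩, rfl⟩ := mem_critCounts_iff.1 hn
  exact List.countP_le_length.trans hnd.length_le_card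

end Counts

theorem maxCritCount_eq_zero {B : Set C} {Crit : C → Prop} (hB : ∀ σ ∈ S, ∀ b ∈ B, σ b ∈ B)
    {q : C} (hq : q ∈ B) : maxCritCount S B Crit q = 0 := by
  refine Nat.eq_zero_of_le_zero (csSup_le' fun n hn => ?_)
  obtain ⟨l, ⟨-, hc, -⟩, rfl⟩ := mem_critCounts_iff.1 hn
  refine (List.countP_eq_zero.2 fun x hx => ?_).le
  simpa using fun _ => mem_of_netLE hB (netLE_of_mem_of_isChain hc hx) hq

section MaxCritCount

variable [Fintype C] {B : Set C} {Crit : C → Prop}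

theorem maxCritCount_le {p : C} (hp : p ∉ B) :
    maxCritCount S B Crit p ≤
      sSup (maxCritCount S B Crit '' {q | netLE S p q ∧ q ≠ p}) + if Crit p then 1 else 0 := by
  refine csSup_le' fun n hn => ?_
  obtain ⟨q, hpq, m, hm, rfl⟩ := exists_strictStep_of_mem_critCounts hp hn
  gcongr
  calc m ≤ maxCritCount S B Crit q := le_csSup (critCounts_bddAbove q) hm
    _ ≤ _ := le_csSup (Set.toFinite _).bddAbove
      (Set.mem_image_of_mem _ (show netLE S p q ∧ q ≠ p from ⟨.single hpq.1, hpq.2.symm⟩))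

theorem maxCritCount_mem (hff : ¬ HasCycle S) (hreach : ∀ p ∉ B, ∃ b ∈ B, netLE S p b)
    (p : C) : maxCritCount S B Crit p ∈ critCounts S B Crit p :=
  Nat.sSup_mem (critCounts_nonempty hff hreach p) (critCounts_bddAbove p)

theorem maxCritCount_add_le (hff : ¬ HasCycle S) (hreach : ∀ p ∉ B, ∃ b ∈ B, netLE S p b)
    {p q : C} (hpq : strictStep S p q) :
    maxCritCount S B Crit q + (if Crit p ∧ p ∉ B then 1 else 0) ≤ maxCritCount S B Crit p :=
  le_csSup (critCounts_bddAbove p) (add_mem_critCounts hff hpq (maxCritCount_mem hff hreach q))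

theorem maxCritCount_mono (hff : ¬ HasCycle S) (hreach : ∀ p ∉ B, ∃ b ∈ B, netLE S p b)
    {p q : C} (h : ReflTransGen (strictStep S) p q) :
    maxCritCount S B Crit q ≤ maxCritCount S B Crit p := by
  induction h using ReflTransGen.head_induction_on with
  | refl => rfl
  | head hpr _ ih => exact ih.trans (le_self_add.trans (maxCritCount_add_le hff hreach hpr))

theorem maxCritCount_add_le_of_netLE (hff : ¬ HasCycle S) (hreach : ∀ p ∉ B, ∃ b ∈ B, netLE S p b)
    {p q : C} (h : netLE S p q) (hqp : q ≠ p) :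
    maxCritCount S B Crit q + (if Crit p ∧ p ∉ B then 1 else 0) ≤ maxCritCount S B Crit p := by
  obtain ⟨r, hpr, hrq⟩ := TransGen.head'_iff.1 (transGen_strictStep_of_netLE h hqp)
  exact (Nat.add_le_add_right (maxCritCount_mono hff hreach hrq) _).trans
    (maxCritCount_add_le hff hreach hpr)

theorem one_le_maxCritCount (hff : ¬ HasCycle S) (hreach : ∀ p ∉ B, ∃ b ∈ B, netLE S p b)
    (hcrit : ∀ p ∉ B, (∀ q : C, netLE S p q → q ≠ p → q ∈ B) → Crit p) {p : C} (hp : p ∉ B) :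
    1 ≤ maxCritCount S B Crit p := by
  obtain ⟨a, ⟨hpa, haB⟩, hmax⟩ :=
    (wellFounded_strictAbove hff).has_min {x | netLE S p x ∧ x ∉ B} ⟨p, .refl, hp⟩
  have hca : Crit a := hcrit a haB fun q haq hqa => by
    by_contra hqB
    exact hmax q ⟨hpa.trans haq, hqB⟩ (transGen_strictStep_of_netLE haq hqa)
  obtain ⟨l, -, hcount⟩ := mem_critCounts_iff.1 (maxCritCount_mem hff hreach (Crit := Crit) a)
  calc 1 ≤ maxCritCount S B Crit a := by simp [hcount, hca, haB]
    _ ≤ maxCritCount S B Crit p :=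
      maxCritCount_mono hff hreach (reflTransGen_strictStep_of_netLE hpa)

theorem maxCritCount_eq (hff : ¬ HasCycle S) (hreach : ∀ p ∉ B, ∃ b ∈ B, netLE S p b)
    {p : C} (hp : p ∉ B) :
    maxCritCount S B Crit p =
      sSup (maxCritCount S B Crit '' {q | netLE S p q ∧ q ≠ p}) + if Crit p then 1 else 0 := by
  refine le_antisymm (maxCritCount_le hp) ?_
  obtain ⟨b, hb, hpb⟩ := hreach p hp
  have hne : {q | netLE S p q ∧ q ≠ p}.Nonempty := ⟨b, hpb, fun h => hp (h ▸ hb)⟩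
  obtain ⟨q, hq, hqmax⟩ := Nat.sSup_mem (hne.image (maxCritCount S B Crit))
    (Set.toFinite _).bddAbove
  rw [← hqmax]
  simpa [hp] using maxCritCount_add_le_of_netLE hff hreach (Crit := Crit) hq.1 hq.2

end MaxCritCount

end FeedforwardNetwork

open FeedforwardNetwork

theorem mu_recursion_general {C : Type*} [Fintype C]
    (S : Finset (C → C)) (hff : ¬ HasCycle S)
    (B : Set C) (hB : ∀ σ ∈ S, ∀ b ∈ B, σ b ∈ B)
    (Crit : C → Prop)
    (hcrit : ∀ p ∉ B, (∀ q : C, netLE S p q → q ≠ p → q ∈ B) → Crit p)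
    (hreach : ∀ p ∉ B, ∃ b ∈ B, netLE S p b)
    (μ : C → ℕ)
    (hμ : ∀ p : C, μ p = if p ∈ B then 0 else
      sSup {n : ℕ | ∃ b ∈ B, ∃ (k : ℕ) (ω : Fin (k + 1) → C),
        Function.Injective ω ∧ ω 0 = b ∧ ω (Fin.last k) = p ∧
        (∀ i : Fin k, netStep S (ω i.succ) (ω i.castSucc)) ∧
        n = (Finset.univ.filter fun i : Fin (k + 1) =>
          Crit (ω i) ∧ ω i ∉ B).card} - 1) :
    (∀ p ∈ B, μ p = 0) ∧
    (∀ p ∉ B, (∀ q : C, netLE S p q → q ≠ p → q ∈ B) → μ p = 0) ∧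
    (∀ p ∉ B, ¬ Crit p → μ p = sSup (μ '' {q : C | netLE S p q ∧ q ≠ p})) ∧
    (∀ p ∉ B, Crit p → (∃ q : C, netLE S p q ∧ q ≠ p ∧ q ∉ B) →
      μ p = sSup (μ '' {q : C | netLE S p q ∧ q ≠ p}) + 1) := by
  have hrec (p : C) (hp : p ∉ B) := maxCritCount_eq hff hreach (Crit := Crit) hp
  set N := maxCritCount S B Crit
  have hμN : μ = (· - 1) ∘ N := funext fun q => by
    rw [hμ q]
    split_ifs with hq
    · simp [N, maxCritCount_eq_zero hB hq]
    · rfl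
  have hsup (p : C) : sSup (μ '' {q | netLE S p q ∧ q ≠ p}) =
      sSup (N '' {q | netLE S p q ∧ q ≠ p}) - 1 := by
    rw [hμN, Set.image_comp, Nat.sSup_image_sub (Set.toFinite _).bddAbove]
  refine ⟨fun p hp => by rw [hμ p, if_pos hp], fun p hp hall => ?_, fun p hp hnc => ?_,
    fun p hp hc ⟨q, hpq, hqp, hq⟩ => ?_⟩
  · have h0 : sSup (N '' {q | netLE S p q ∧ q ≠ p}) = 0 := by
      refine Nat.eq_zero_of_le_zero (csSup_le' ?_)
      rintro _ ⟨q, hq, rfl⟩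
      exact (maxCritCount_eq_zero hB (hall q hq.1 hq.2)).le
    rw [hμN, Function.comp_apply, hrec p hp, h0]
    split_ifs <;> rfl
  · rw [hsup, hμN, Function.comp_apply, hrec p hp, if_neg hnc, add_zero]
  · have h1 : 1 ≤ sSup (N '' {q | netLE S p q ∧ q ≠ p}) :=
      (one_le_maxCritCount hff hreach hcrit hq).trans
        (le_csSup (Set.toFinite _).bddAbove (Set.mem_image_of_mem N ⟨hpq, hqp⟩))
    rw [hsup, hμN, Function.comp_apply, hrec p hp, if_pos hc]
    omega

/-- Equivalence of the path-counting definition (3.4) of the amplification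
number `μ_p` with its iterative characterization (3.5):  `μ_p = 0` on the
subnetwork `B`, and otherwise `μ_p` is one less than the maximal number of
critical non-`B` cells along loop-free paths from `B` to `p`; iteratively,
`μ_p = 0` if all cells strictly above `p` lie in `B`, `μ_p = max_{q ⊳ p} μ_q`
if `p` is non-critical, and `μ_p = max_{q ⊳ p} μ_q + 1` if `p ∉ B` is critical
with some `q ⊳ p` outside `B`. -/
theorem mu_recursion {C : Type*} [Fintype C] [DecidableEq C]
    (S : Finset (C → C)) (hid : (id : C → C) ∈ S) (hff : ¬ HasCycle S)
    (B : Set C) (hB : ∀ σ ∈ S, ∀ b ∈ B, σ b ∈ B)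
    (Crit : C → Prop)
    (hcrit : ∀ p ∉ B, (∀ q : C, netLE S p q → q ≠ p → q ∈ B) → Crit p)
    (hreach : ∀ p ∉ B, ∃ b ∈ B, netLE S p b)
    (μ : C → ℕ)
    (hμ : ∀ p : C, μ p = if p ∈ B then 0 else
      sSup {n : ℕ | ∃ b ∈ B, ∃ (k : ℕ) (ω : Fin (k + 1) → C),
        Function.Injective ω ∧ ω 0 = b ∧ ω (Fin.last k) = p ∧
        (∀ i : Fin k, netStep S (ω i.succ) (ω i.castSucc)) ∧
        n = (Finset.univ.filter fun i : Fin (k + 1) =>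
          Crit (ω i) ∧ ω i ∉ B).card} - 1) :
    (∀ p ∈ B, μ p = 0) ∧
    (∀ p ∉ B, (∀ q : C, netLE S p q → q ≠ p → q ∈ B) → μ p = 0) ∧
    (∀ p ∉ B, ¬ Crit p → μ p = sSup (μ '' {q : C | netLE S p q ∧ q ≠ p})) ∧
    (∀ p ∉ B, Crit p → (∃ q : C, netLE S p q ∧ q ≠ p ∧ q ∉ B) →
      μ p = sSup (μ '' {q : C | netLE S p q ∧ q ≠ p}) + 1) :=
  mu_recursion_general S hff B hB Crit hcrit hreach μ hμ
end
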